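/- arXiv:1707.02337 — 2 statements merged into one kernel-verified Lean document; each statement's English description precedes it below -/
import Mathlib

section
/- Let C be an (n,k) piggybacking code over F_q with t = 2 substripes (base code MDS of dimension k, 2 ≤ k, k+2 ≤ n) that admits, for some node i* and repair set S of size k+1, a linear repair scheme with perfect bandwidth b = k+1. Then q ≥ k+1. -/
/-!
Combine the two dual matrices into the pencil `c ↦ c 0 • W0 + c 1 • W1` of dual codewords,
supported on the `k + 2` rows `T = S ∪ {i*}`. A member of the pencil vanishing on two rows of
`S` is supported on `k` rows, hence zero by the MDS property; since the rows at `i*` are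
independent, this forces `c = 0`. Together with the rank-one rows on `S` this makes the map
sending `c` to the second column of its pencil member injective. A second column vanishing on
two rows of `T` is again zero by the MDS property, so the `k + 2` functionals
`c ↦ (c 0 • W0 + c 1 • W1) i 1`, `i ∈ T`, have pairwise trivially intersecting kernels in `K²`:
they are `k + 2` distinct points of the projective line, which has `q + 1` points.
-/

open Matrix

/-- `G` generates an MDS code: any `k` columns of `G` are linearly independent. -/
def IsMDS {n k : ℕ} {K : Type*} [Field K] (G : Matrix (Fin k) (Fin n) K) : Prop :=
  ∀ s : Finset (Fin n), s.card = k →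
    LinearIndependent K (fun j : s => fun r : Fin k => G r j.1)

open Module
open scoped LinearAlgebra.Projectivization

theorem card_le_natCard_add_one_of_pairwiseDisjoint_ker {K V ι : Type*} [Field K] [Finite K]
    [AddCommGroup V] [Module K V] (hV : finrank K V = 2) (f : ι → V →ₗ[K] K) (T : Finset ι)
    (hT : (T : Set ι).PairwiseDisjoint fun i => LinearMap.ker (f i)) :
    T.card ≤ Nat.card K + 1 := by
  have : Module.Finite K V := Module.finite_of_finrank_eq_succ hV
  have : Finite V := Module.finite_of_finite K
  have hker (i : ι) : ∃ v : V, v ≠ 0 ∧ f i v = 0 := by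
    have := LinearMap.ker_ne_bot_of_finrank_lt (f := f i) (by rw [hV, finrank_self]; norm_num)
    simpa [Submodule.ne_bot_iff, and_comm] using this
  choose v hv0 hv using hker
  have hinj : Function.Injective fun i : T => Projectivization.mk K (v i) (hv0 i) := by
    rintro ⟨i, hi⟩ ⟨j, hj⟩ hij
    by_contra hne
    obtain ⟨a, ha⟩ := (Projectivization.mk_eq_mk_iff K _ _ _ _).mp hij
    refine hv0 i (Submodule.disjoint_def.mp (hT hi hj fun h => hne (Subtype.ext h)) _ (hv i) ?_)
    rw [LinearMap.mem_ker, ← ha, Units.smul_def, map_smul, hv j, smul_zero]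
  calc T.card = Nat.card T := (Nat.card_eq_finsetCard T).symm
    _ ≤ Nat.card (ℙ K V) := Nat.card_le_card_of_injective _ hinj
    _ = Nat.card K + 1 := Projectivization.card_of_finrank_two K V hV

section

variable {K : Type*} [Field K]

theorem linearIndependent_pair_of_finrank_span_eq_two {V : Type*} [AddCommGroup V] [Module K V]
    {x y : V} (h : finrank K (Submodule.span K {x, y}) = 2) : LinearIndependent K ![x, y] := by
  rw [linearIndependent_iff_card_eq_finrank_span, Matrix.range_cons_cons_empty, Fintype.card_fin]
  exact h.symm

theorem LinearMap.apply_eq_zero_of_finrank_eq_one {V W : Type*} [AddCommGroup V] [Module K V]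
    [AddCommGroup W] [Module K W] {U : Submodule K V} (hU : finrank K U = 1) {z : V} (hz : z ∈ U)
    (hz0 : z ≠ 0) {f : V →ₗ[K] W} (hfz : f z = 0) {w : V} (hw : w ∈ U) : f w = 0 := by
  obtain ⟨a, ha⟩ :=
    (finrank_eq_one_iff_of_nonzero' (⟨z, hz⟩ : U) (by simpa using hz0)).mp hU ⟨w, hw⟩
  have hwz : w = a • z := congrArg Subtype.val ha.symm
  rw [hwz, map_smul, hfz, smul_zero]

theorem Finset.card_erase_erase_of_card_eq {α : Type*} [DecidableEq α] {s : Finset α} {m : ℕ}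
    (hs : s.card = m + 2) {i j : α} (hi : i ∈ s) (hj : j ∈ s) (hij : i ≠ j) :
    ((s.erase i).erase j).card = m := by
  rw [card_erase_of_mem (mem_erase.mpr ⟨hij.symm, hj⟩), card_erase_of_mem hi, hs]
  rfl

variable {k n : ℕ}

theorem IsMDS.eq_zero_of_mulVec_eq_zero {G : Matrix (Fin k) (Fin n) K} (hG : IsMDS G)
    (hkn : k ≤ n) {u : Fin n → K} (hu : G *ᵥ u = 0) {s : Finset (Fin n)} (hs : s.card ≤ k)
    (hsupp : ∀ i ∉ s, u i = 0) : u = 0 := by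
  obtain ⟨t, hst, -, ht⟩ :=
    Finset.exists_subsuperset_card_eq s.subset_univ hs (by simpa using hkn)
  have hsupp' : ∀ i ∉ t, u i = 0 := fun i hi => hsupp i fun his => hi (hst his)
  have hsum : ∑ j : t, u j • (fun r => G r j) = 0 := by
    ext r
    have := congrFun hu r
    simp only [mulVec, dotProduct, Pi.zero_apply] at this
    rw [← Finset.sum_subset t.subset_univ fun i _ hi => by rw [hsupp' i hi, mul_zero]] at this
    simp only [Finset.sum_apply, Pi.smul_apply, smul_eq_mul, Pi.zero_apply]
    rw [Finset.sum_coe_sort t fun j => u j * G r j]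
    simpa only [mul_comm] using this
  ext i
  by_cases hi : i ∈ t
  · exact Fintype.linearIndependent_iff.mp (hG t ht) (fun j => u j) hsum ⟨i, hi⟩
  · exact hsupp' i hi

def piggybackDual (G P : Matrix (Fin k) (Fin n) K) : Submodule K (Matrix (Fin n) (Fin 2) K) where
  carrier := {W | G *ᵥ (fun r => W r 0) + P *ᵥ (fun r => W r 1) = 0 ∧ G *ᵥ (fun r => W r 1) = 0}
  add_mem' {W W'} hW hW' := by
    simp only [Set.mem_ofPred_eq, Matrix.add_apply, ← Pi.add_def, mulVec_add] at *
    constructor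
    · linear_combination (norm := abel) hW.1 + hW'.1
    · rw [hW.2, hW'.2, add_zero]
  zero_mem' := by simp [← Pi.zero_def]
  smul_mem' a W hW := by
    simp only [Set.mem_ofPred_eq, Matrix.smul_apply, ← Pi.smul_def, mulVec_smul] at *
    rw [← smul_add, hW.1, hW.2, smul_zero]
    exact ⟨rfl, rfl⟩

theorem IsMDS.eq_zero_of_mem_piggybackDual {G P : Matrix (Fin k) (Fin n) K} (hG : IsMDS G)
    (hkn : k ≤ n) {W : Matrix (Fin n) (Fin 2) K} (hW : W ∈ piggybackDual G P)
    {s : Finset (Fin n)} (hs : s.card ≤ k) (hsupp : ∀ i ∉ s, W i = 0) : W = 0 := by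
  have h1 : (fun r => W r 1) = 0 :=
    hG.eq_zero_of_mulVec_eq_zero hkn hW.2 hs fun i hi => by simp [hsupp i hi]
  have h0 : (fun r => W r 0) = 0 := by
    refine hG.eq_zero_of_mulVec_eq_zero hkn ?_ hs fun i hi => by simp [hsupp i hi]
    simpa [h1] using hW.1
  ext i j
  fin_cases j
  exacts [congrFun h0 i, congrFun h1 i]

def pencil (W0 W1 : Matrix (Fin n) (Fin 2) K) : (Fin 2 → K) →ₗ[K] Matrix (Fin n) (Fin 2) K :=
  Fintype.linearCombination K ![W0, W1]

theorem pencil_apply (W0 W1 : Matrix (Fin n) (Fin 2) K) (c : Fin 2 → K) :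
    pencil W0 W1 c = c 0 • W0 + c 1 • W1 := by
  simp [pencil, Fintype.linearCombination_apply, Fin.sum_univ_two]

theorem pencil_apply_apply (W0 W1 : Matrix (Fin n) (Fin 2) K) (c : Fin 2 → K) (i : Fin n) :
    pencil W0 W1 c i = c 0 • W0 i + c 1 • W1 i := by
  rw [pencil_apply]
  rfl

theorem pencil_apply_mem_span (W0 W1 : Matrix (Fin n) (Fin 2) K) (c : Fin 2 → K) (i : Fin n) :
    pencil W0 W1 c i ∈ Submodule.span K {W0 i, W1 i} :=
  Submodule.mem_span_pair.mpr ⟨c 0, c 1, (pencil_apply_apply W0 W1 c i).symm⟩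

structure IsPerfectRepairScheme (G P : Matrix (Fin k) (Fin n) K) (istar : Fin n)
    (S : Finset (Fin n)) (W0 W1 : Matrix (Fin n) (Fin 2) K) : Prop where
  card_eq : S.card = k + 1
  istar_notMem : istar ∉ S
  mem_dual₀ : W0 ∈ piggybackDual G P
  mem_dual₁ : W1 ∈ piggybackDual G P
  eq_zero_of_notMem : ∀ i : Fin n, i ∉ S → i ≠ istar → W0 i = 0 ∧ W1 i = 0
  finrank_span_istar : finrank K (Submodule.span K {W0 istar, W1 istar}) = 2
  finrank_span_of_mem : ∀ i ∈ S, finrank K (Submodule.span K {W0 i, W1 i}) = 1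

namespace IsPerfectRepairScheme

variable {G P : Matrix (Fin k) (Fin n) K} {istar : Fin n} {S : Finset (Fin n)}
  {W0 W1 : Matrix (Fin n) (Fin 2) K}

theorem card_insert (h : IsPerfectRepairScheme G P istar S W0 W1) :
    (insert istar S).card = k + 2 := by
  rw [Finset.card_insert_of_notMem h.istar_notMem, h.card_eq]

theorem le_length (h : IsPerfectRepairScheme G P istar S W0 W1) : k ≤ n := by
  have := (insert istar S).card_le_univ
  rw [h.card_insert, Fintype.card_fin] at this
  omega

theorem pencil_mem (h : IsPerfectRepairScheme G P istar S W0 W1) (c : Fin 2 → K) :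
    pencil W0 W1 c ∈ piggybackDual G P := by
  rw [pencil_apply]
  exact add_mem (Submodule.smul_mem _ _ h.mem_dual₀) (Submodule.smul_mem _ _ h.mem_dual₁)

theorem pencil_apply_of_notMem (h : IsPerfectRepairScheme G P istar S W0 W1) (c : Fin 2 → K)
    {i : Fin n} (hi : i ∉ insert istar S) : pencil W0 W1 c i = 0 := by
  rw [Finset.mem_insert, not_or] at hi
  obtain ⟨h0, h1⟩ := h.eq_zero_of_notMem i hi.2 hi.1
  rw [pencil_apply_apply, h0, h1, smul_zero, smul_zero, add_zero]

theorem eq_or_eq_or_pencil_apply_eq_zero (h : IsPerfectRepairScheme G P istar S W0 W1)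
    (c : Fin 2 → K) {i j r : Fin n} (hr : r ∉ ((insert istar S).erase i).erase j) :
    r = j ∨ r = i ∨ pencil W0 W1 c r = 0 := by
  by_cases hrj : r = j
  · exact .inl hrj
  by_cases hri : r = i
  · exact .inr (.inl hri)
  exact .inr (.inr (h.pencil_apply_of_notMem c (by simpa [hri, hrj] using hr)))

theorem eq_zero_of_pencil_apply_istar (h : IsPerfectRepairScheme G P istar S W0 W1)
    {c : Fin 2 → K} (hc : pencil W0 W1 c istar = 0) : c = 0 := by
  rw [pencil_apply_apply] at hc
  obtain ⟨h0, h1⟩ := LinearIndependent.pair_iff.mp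
    (linearIndependent_pair_of_finrank_span_eq_two h.finrank_span_istar) _ _ hc
  ext j
  fin_cases j
  exacts [h0, h1]

theorem exists_pencil_apply_istar (h : IsPerfectRepairScheme G P istar S W0 W1)
    (v : Fin 2 → K) : ∃ c, pencil W0 W1 c istar = v := by
  have htop : Submodule.span K {W0 istar, W1 istar} = ⊤ :=
    Submodule.eq_top_of_finrank_eq (by rw [h.finrank_span_istar, finrank_fin_fun])
  obtain ⟨a, b, hab⟩ := Submodule.mem_span_pair.mp (htop ▸ Submodule.mem_top : v ∈ _)
  exact ⟨![a, b], by simpa [pencil_apply_apply] using hab⟩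

theorem pencil_apply_eq_zero_of_mem (h : IsPerfectRepairScheme G P istar S W0 W1) {i : Fin n}
    (hi : i ∈ S) {c : Fin 2 → K} (hc : pencil W0 W1 c i ≠ 0) (hc1 : pencil W0 W1 c i 1 = 0)
    (d : Fin 2 → K) : pencil W0 W1 d i 1 = 0 :=
  LinearMap.apply_eq_zero_of_finrank_eq_one (f := LinearMap.proj 1) (h.finrank_span_of_mem i hi)
    (pencil_apply_mem_span W0 W1 c i) hc hc1 (pencil_apply_mem_span W0 W1 d i)

theorem eq_zero_of_pencil_apply_eq_zero (h : IsPerfectRepairScheme G P istar S W0 W1)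
    (hG : IsMDS G) {i j : Fin n} (hi : i ∈ S) (hj : j ∈ S) (hij : i ≠ j) {c : Fin 2 → K}
    (hci : pencil W0 W1 c i = 0) (hcj : pencil W0 W1 c j = 0) : c = 0 := by
  refine h.eq_zero_of_pencil_apply_istar ?_
  suffices pencil W0 W1 c = 0 by rw [this]; rfl
  refine hG.eq_zero_of_mem_piggybackDual h.le_length (h.pencil_mem c)
    (Finset.card_erase_erase_of_card_eq h.card_insert (Finset.mem_insert_of_mem hi)
      (Finset.mem_insert_of_mem hj) hij).le fun r hr => ?_
  rcases h.eq_or_eq_or_pencil_apply_eq_zero c hr with rfl | rfl | hr0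
  exacts [hcj, hci, hr0]

theorem eq_zero_of_pencil_col_one_eq_zero (h : IsPerfectRepairScheme G P istar S W0 W1)
    (hG : IsMDS G) (hk : 2 ≤ k) {c : Fin 2 → K} (hc : ∀ r, pencil W0 W1 c r 1 = 0) : c = 0 := by
  by_contra hc0
  obtain ⟨i₀, hi₀⟩ : ∃ i₀, ∀ i ∈ S, i ≠ i₀ → pencil W0 W1 c i ≠ 0 := by
    by_cases hZ : ∃ i₀ ∈ S, pencil W0 W1 c i₀ = 0
    · obtain ⟨i₀, hi₀S, hci₀⟩ := hZ
      exact ⟨i₀, fun i hi hne hci =>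
        hc0 (h.eq_zero_of_pencil_apply_eq_zero hG hi hi₀S hne hci hci₀)⟩
    · exact ⟨istar, fun i hi _ hci => hZ ⟨i, hi, hci⟩⟩
  -- every row of `S` other than `i₀` spans the line `{x | x 1 = 0}`
  have hcol (d : Fin 2 → K) : (fun r => pencil W0 W1 d r 1) = 0 := by
    refine hG.eq_zero_of_mulVec_eq_zero h.le_length (h.pencil_mem d).2
      (s := {istar, i₀}) (Finset.card_le_two.trans hk) fun r hr => ?_
    rw [Finset.mem_insert, Finset.mem_singleton, not_or] at hr
    by_cases hrS : r ∈ S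
    · exact h.pencil_apply_eq_zero_of_mem hrS (hi₀ r hrS hr.2) (hc r) d
    · rw [h.pencil_apply_of_notMem d (by simp [hrS, hr.1])]
      rfl
  obtain ⟨d, hd⟩ := h.exists_pencil_apply_istar (Pi.single 1 1)
  simpa [hd] using congrFun (hcol d) istar

theorem pairwiseDisjoint_ker_entry_pencil (h : IsPerfectRepairScheme G P istar S W0 W1)
    (hG : IsMDS G) (hk : 2 ≤ k) :
    ((insert istar S : Finset (Fin n)) : Set (Fin n)).PairwiseDisjoint
      fun i => LinearMap.ker (entryLinearMap K K i 1 ∘ₗ pencil W0 W1) := by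
  intro i hi j hj hij
  rw [Function.onFun, Submodule.disjoint_def]
  intro c hci hcj
  have hcol : (fun r => pencil W0 W1 c r 1) = 0 := by
    refine hG.eq_zero_of_mulVec_eq_zero h.le_length (h.pencil_mem c).2
      (Finset.card_erase_erase_of_card_eq h.card_insert hi hj hij).le fun r hr => ?_
    rcases h.eq_or_eq_or_pencil_apply_eq_zero c hr with rfl | rfl | hr0
    exacts [hcj, hci, congrFun hr0 1]
  exact h.eq_zero_of_pencil_col_one_eq_zero hG hk (congrFun hcol)

end IsPerfectRepairScheme

end

theorem perfect_bandwidth_field_size_general {n k : ℕ} (K : Type*) [Field K] [Fintype K]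
    (hk : 2 ≤ k)
    (G : Matrix (Fin k) (Fin n) K) (hMDS : IsMDS G)
    (P : Matrix (Fin k) (Fin n) K)
    (istar : Fin n) (S : Finset (Fin n)) (hS : S.card = k + 1) (hiS : istar ∉ S)
    (W0 W1 : Matrix (Fin n) (Fin 2) K)
    (hd0 : G *ᵥ (fun r => W0 r 0) + P *ᵥ (fun r => W0 r 1) = 0 ∧
      G *ᵥ (fun r => W0 r 1) = 0)
    (hd1 : G *ᵥ (fun r => W1 r 0) + P *ᵥ (fun r => W1 r 1) = 0 ∧
      G *ᵥ (fun r => W1 r 1) = 0)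
    (hsupp : ∀ i : Fin n, i ∉ S → i ≠ istar → W0 i = 0 ∧ W1 i = 0)
    (hfull : Module.finrank K
      (Submodule.span K ({W0 istar, W1 istar} : Set (Fin 2 → K))) = 2)
    (hdim : ∀ i ∈ S, Module.finrank K
      (Submodule.span K ({W0 i, W1 i} : Set (Fin 2 → K))) = 1) :
    k + 1 ≤ Fintype.card K := by
  have h : IsPerfectRepairScheme G P istar S W0 W1 := ⟨hS, hiS, hd0, hd1, hsupp, hfull, hdim⟩
  have hcard := card_le_natCard_add_one_of_pairwiseDisjoint_ker (finrank_fin_fun K) _ _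
    (h.pairwiseDisjoint_ker_entry_pencil hMDS hk)
  rw [h.card_insert, Nat.card_eq_fintype_card] at hcard
  omega

/-- an `(n,k)` piggybacking code over `F_q` with `t = 2` substripes
(MDS base code of dimension `k`, `2 ≤ k`, `k+2 ≤ n`) admitting a perfect-bandwidth
(`b = k+1`) linear repair scheme for some node `i*` from a repair set `S` of size
`k+1` forces `q ≥ k+1`. -/
theorem perfect_bandwidth_field_size {n k : ℕ} (K : Type*) [Field K] [Fintype K]
    (hk : 2 ≤ k) (hn : k + 2 ≤ n)
    (G : Matrix (Fin k) (Fin n) K) (hMDS : IsMDS G)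
    (P : Matrix (Fin k) (Fin n) K)
    (istar : Fin n) (S : Finset (Fin n)) (hS : S.card = k + 1) (hiS : istar ∉ S)
    (W0 W1 : Matrix (Fin n) (Fin 2) K)
    (hd0 : G *ᵥ (fun r => W0 r 0) + P *ᵥ (fun r => W0 r 1) = 0 ∧
      G *ᵥ (fun r => W0 r 1) = 0)
    (hd1 : G *ᵥ (fun r => W1 r 0) + P *ᵥ (fun r => W1 r 1) = 0 ∧
      G *ᵥ (fun r => W1 r 1) = 0)
    (hsupp : ∀ i : Fin n, i ∉ S → i ≠ istar → W0 i = 0 ∧ W1 i = 0)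
    (hfull : Module.finrank K
      (Submodule.span K ({W0 istar, W1 istar} : Set (Fin 2 → K))) = 2)
    (hdim : ∀ i ∈ S, Module.finrank K
      (Submodule.span K ({W0 i, W1 i} : Set (Fin 2 → K))) = 1) :
    k + 1 ≤ Fintype.card K :=
  perfect_bandwidth_field_size_general K hk G hMDS P istar S hS hiS W0 W1 hd0 hd1 hsupp hfull hdim
end

section
/- If there exists an (n,k) piggybacking code over F_q with t ≥ 3 substripes admitting, for every node i*, a linear repair scheme from some set of nodes with bandwidth b, then there exists an (n,k) piggybacking code over F_q with t−1 substripes admitting, for every node i*, a linear repair scheme with bandwidth at most b−1. In particular, if a perfect-bandwidth (b = k+t−1) piggybacking code exists with t substripes, one exists with t−1 substripes for the same n, k, q. -/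
open Matrix

/-- Membership in the dual of the piggybacking code (with base generator `G` and
piggybacking matrices `P i j`, used for `i < j`), via the column characterization. -/
def PiggyDual {n t k : ℕ} {K : Type*} [Field K] [Fintype K]
    (G : Matrix (Fin k) (Fin n) K) (P : Fin t → Fin t → Matrix (Fin k) (Fin n) K)
    (W : Matrix (Fin n) (Fin t) K) : Prop :=
  ∀ i : Fin t,
    G *ᵥ (fun r => W r i) + ∑ j ∈ Finset.Ioi i, (P i j) *ᵥ (fun r => W r j) = 0


/-!
Normalize the repair matrices of node `istar` so that their rows at `istar` are the unit vectors
`e₀, …, e_t`. Over an MDS base code a dual matrix supported on the single node `istar` vanishes, so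
the matrix with row `e₀` has a nonzero entry `(i₀, ℓ)` at some helper `i₀ ∈ S`. Eliminating that
entry from the other `t` matrices and deleting the first substripe gives `t` dual matrices of the
code with `P' i j = P (i + 1) (j + 1)` whose rows at `istar` are `e₀, …, e_{t-1}`. No helper's row
space grows, and at `i₀` it loses the direction of `ℓ`, so the bandwidth drops by one. If `n < k`,
the zero code is vacuously MDS and repairs every node for free.
-/

section PiggybackingDual

variable {n k t : ℕ} {K : Type*} [Field K] [Fintype K]

def piggyDualSpace (G : Matrix (Fin k) (Fin n) K) (P : Fin t → Fin t → Matrix (Fin k) (Fin n) K) :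
    Submodule K (Matrix (Fin n) (Fin t) K) where
  carrier := {W | PiggyDual G P W}
  zero_mem' i := by
    have hcol : ∀ j, (fun r => (0 : Matrix (Fin n) (Fin t) K) r j) = 0 := fun _ => rfl
    simp only [hcol, mulVec_zero, Finset.sum_const_zero, add_zero]
  add_mem' {W₁ W₂} h₁ h₂ i := by
    have hcol : ∀ j, (fun r => (W₁ + W₂) r j) = (fun r => W₁ r j) + fun r => W₂ r j :=
      fun _ => rfl
    simp only [hcol, mulVec_add, Finset.sum_add_distrib]
    rw [add_add_add_comm, h₁ i, h₂ i, add_zero]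
  smul_mem' c W h i := by
    have hcol : ∀ j, (fun r => (c • W) r j) = c • fun r => W r j := fun _ => rfl
    simp only [hcol, mulVec_smul, ← Finset.smul_sum, ← smul_add, h i, smul_zero]

theorem PiggyDual.submatrix_succ {G : Matrix (Fin k) (Fin n) K}
    {P : Fin (t + 1) → Fin (t + 1) → Matrix (Fin k) (Fin n) K}
    {W : Matrix (Fin n) (Fin (t + 1)) K} (hW : PiggyDual G P W) :
    PiggyDual G (fun i j => P i.succ j.succ) (W.submatrix id Fin.succ) := by
  intro i
  simpa using hW i.succ

theorem PiggyDual.eq_zero_of_forall_ne {G : Matrix (Fin k) (Fin n) K}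
    {P : Fin t → Fin t → Matrix (Fin k) (Fin n) K} {W : Matrix (Fin n) (Fin t) K}
    {istar : Fin n} (hcol : G.col istar ≠ 0) (hW : PiggyDual G P W)
    (hsupp : ∀ i, i ≠ istar → W i = 0) : W = 0 := by
  classical
  suffices h : ∀ j, (fun r => W r j) = 0 from
    Matrix.ext fun r j => congrFun (h j) r
  intro j
  -- downward induction: the piggybacks in equation `j` only involve later columns
  induction j using WellFoundedGT.induction with
  | ind j ih =>
    have hcolumn : (fun r => W r j) = Pi.single istar (W istar j) := by
      funext r
      by_cases hr : r = istar
      · subst hr; simp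
      · simp [hr, hsupp r hr]
    have hj := hW j
    rw [Finset.sum_eq_zero fun j' hj' => by rw [ih j' (Finset.mem_Ioi.mp hj'), mulVec_zero],
      add_zero, hcolumn, mulVec_single] at hj
    have hentry : W istar j = 0 :=
      MulOpposite.op_eq_zero_iff _ |>.mp <| (smul_eq_zero.mp hj).resolve_right hcol
    rw [hcolumn, hentry, Pi.single_zero]

theorem PiggyDual.exists_mem_ne_zero {G : Matrix (Fin k) (Fin n) K}
    {P : Fin t → Fin t → Matrix (Fin k) (Fin n) K} {W : Matrix (Fin n) (Fin t) K}
    {istar : Fin n} {S : Finset (Fin n)} (hcol : G.col istar ≠ 0) (hW : PiggyDual G P W)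
    (hsupp : ∀ i ∉ S, i ≠ istar → W i = 0) (hW0 : W ≠ 0) : ∃ i ∈ S, W i ≠ 0 := by
  by_contra! hzero
  exact hW0 <| hW.eq_zero_of_forall_ne hcol fun i hi =>
    if hiS : i ∈ S then hzero i hiS else hsupp i hiS hi

end PiggybackingDual

section RowSpaces

variable (R : Type*) {ι m n α : Type*} [Semiring R] [AddCommMonoid α] [Module R α]

def rowLinearMap (i : m) : Matrix m n α →ₗ[R] n → α where
  toFun M := M i
  map_add' _ _ := rfl
  map_smul' _ _ := rfl

theorem span_range_row_eq_map (W : ι → Matrix m n α) (i : m) :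
    Submodule.span R (Set.range fun j => W j i) =
      (Submodule.span R (Set.range W)).map (rowLinearMap R i) := by
  rw [Submodule.map_span, ← Set.range_comp]
  rfl

end RowSpaces

theorem exists_mem_span_row_eq_single {K ρ ι : Type*} [Field K] {t : ℕ}
    {W : ι → Matrix ρ (Fin t) K} {i : ρ}
    (hrank : Module.finrank K (Submodule.span K (Set.range fun j => W j i)) = t) (a : Fin t) :
    ∃ U ∈ Submodule.span K (Set.range W), U i = Pi.single a 1 := by
  have htop : (Submodule.span K (Set.range W)).map (rowLinearMap K i) = ⊤ := by
    rw [← span_range_row_eq_map]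
    exact Submodule.eq_top_of_finrank_eq (by rw [hrank, Module.finrank_fin_fun])
  exact Submodule.mem_map.mp (htop ▸ Submodule.mem_top)

theorem finrank_span_range_eq_of_forall_eq_single {K : Type*} [Field K] {t : ℕ}
    {v : Fin t → Fin t → K} (hv : ∀ j, v j = Pi.single j 1) :
    Module.finrank K (Submodule.span K (Set.range v)) = t := by
  have hbasis : v = Pi.basisFun K (Fin t) := funext fun j => by simp [hv]
  rw [hbasis, finrank_span_eq_card (Pi.basisFun K (Fin t)).linearIndependent, Fintype.card_fin]

theorem finrank_span_range_map_le {K M N ι : Type*} [Field K] [AddCommGroup M] [Module K M]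
    [AddCommGroup N] [Module K N] [FiniteDimensional K M] (f : M →ₗ[K] N) {p : Submodule K M}
    {v : ι → M} (hv : ∀ j, v j ∈ p) :
    Module.finrank K (Submodule.span K (Set.range fun j => f (v j))) ≤ Module.finrank K p := by
  have hle : Submodule.span K (Set.range fun j => f (v j)) ≤ p.map f :=
    Submodule.span_le.mpr <| Set.range_subset_iff.mpr fun j => Submodule.mem_map_of_mem (hv j)
  exact (Submodule.finrank_mono hle).trans (Submodule.finrank_map_le f p)

theorem sum_finrank_span_rows_submatrix_lt {K ρ ι ι' m m' : Type*} [Field K] [Fintype m]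
    (e : m' → m) {S : Finset ρ} {i0 : ρ} (hi0 : i0 ∈ S) {W : ι → Matrix ρ m K}
    {𝒲' : Submodule K (Matrix ρ m K)} (h𝒲' : 𝒲' ≤ Submodule.span K (Set.range W))
    (hlt : 𝒲'.map (rowLinearMap K i0) < (Submodule.span K (Set.range W)).map (rowLinearMap K i0))
    {V : ι' → Matrix ρ m K} (hV : ∀ j, V j ∈ 𝒲') :
    ∑ i ∈ S, Module.finrank K (Submodule.span K (Set.range fun j => (V j).submatrix id e i)) <
      ∑ i ∈ S, Module.finrank K (Submodule.span K (Set.range fun j => W j i)) := by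
  have hnew : ∀ i, Module.finrank K (Submodule.span K
      (Set.range fun j => (V j).submatrix id e i)) ≤
        Module.finrank K (𝒲'.map (rowLinearMap K i)) := fun i =>
    finrank_span_range_map_le (LinearMap.funLeft K K e) (v := fun j => V j i)
      fun j => Submodule.mem_map_of_mem (hV j)
  refine Finset.sum_lt_sum (fun i _ => (hnew i).trans ?_) ⟨i0, hi0, (hnew i0).trans_lt ?_⟩
  · rw [span_range_row_eq_map]
    exact Submodule.finrank_mono (Submodule.map_mono h𝒲')
  · rw [span_range_row_eq_map]
    exact Submodule.finrank_lt_finrank_of_lt hlt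

section MDS

variable {n k : ℕ} {K : Type*} [Field K]

theorem IsMDS.col_ne_zero {G : Matrix (Fin k) (Fin n) K} (hG : IsMDS G) (hk : 0 < k)
    (hkn : k ≤ n) (i : Fin n) : G.col i ≠ 0 := by
  obtain ⟨s, hs, hcard⟩ := Finset.exists_superset_card_eq (s := {i}) (n := k)
    (by rwa [Finset.card_singleton]) (by simpa using hkn)
  exact (hG s hcard).ne_zero ⟨i, hs (Finset.mem_singleton_self i)⟩

theorem isMDS_zero_of_lt (h : n < k) : IsMDS (0 : Matrix (Fin k) (Fin n) K) := by
  intro s hs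
  have := s.card_le_univ
  simp only [Fintype.card_fin] at this
  omega

end MDS

section RepairSchemes

variable {n k t : ℕ} {K : Type*} [Field K] [Fintype K]

def HasRepairScheme (G : Matrix (Fin k) (Fin n) K) (P : Fin t → Fin t → Matrix (Fin k) (Fin n) K)
    (istar : Fin n) (b : ℕ) : Prop :=
  ∃ S : Finset (Fin n), istar ∉ S ∧
    ∃ W : Fin t → Matrix (Fin n) (Fin t) K,
      (∀ j, PiggyDual G P (W j)) ∧
      (∀ (j) (i : Fin n), i ∉ S → i ≠ istar → W j i = 0) ∧
      Module.finrank K (Submodule.span K (Set.range fun j => W j istar)) = t ∧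
      ∑ i ∈ S, Module.finrank K (Submodule.span K (Set.range fun j => W j i)) ≤ b

theorem hasRepairScheme_zero (istar : Fin n) (b : ℕ) :
    HasRepairScheme (0 : Matrix (Fin k) (Fin n) K) (0 : Fin t → Fin t → _) istar b := by
  classical
  refine ⟨∅, Finset.notMem_empty istar, fun j => Matrix.single istar j 1, fun j i => by simp,
    fun j i _ hi => ?_, finrank_span_range_eq_of_forall_eq_single fun j => ?_, by simp⟩
  · ext c
    simp [Ne.symm hi]
  · ext c
    simp [Matrix.single_apply, Pi.single_apply, eq_comm]

theorem HasRepairScheme.drop_first_substripe {G : Matrix (Fin k) (Fin n) K}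
    {P : Fin (t + 1) → Fin (t + 1) → Matrix (Fin k) (Fin n) K} {istar : Fin n} {b : ℕ}
    (hcol : G.col istar ≠ 0) (h : HasRepairScheme G P istar b) :
    HasRepairScheme G (fun i j => P i.succ j.succ) istar (b - 1) := by
  classical
  obtain ⟨S, hS, W, hdual, hsupp, hrank, hbw⟩ := h
  set 𝒲 := Submodule.span K (Set.range W)
  have h𝒲dual : 𝒲 ≤ piggyDualSpace G P := Submodule.span_le.mpr (Set.range_subset_iff.mpr hdual)
  have h𝒲supp : ∀ i ∉ S, i ≠ istar → 𝒲 ≤ LinearMap.ker (rowLinearMap K i) := fun i hi hi' =>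
    Submodule.span_le.mpr (Set.range_subset_iff.mpr fun j => hsupp j i hi hi')
  choose U hU𝒲 hUistar using exists_mem_span_row_eq_single hrank
  obtain ⟨i0, hi0S, hU0⟩ : ∃ i ∈ S, U 0 i ≠ 0 :=
    (h𝒲dual (hU𝒲 0)).exists_mem_ne_zero hcol (fun i hi hi' => h𝒲supp i hi hi' (hU𝒲 0))
      fun hzero => by simpa [hzero] using congrFun (hUistar 0) 0
  obtain ⟨ℓ, hℓ⟩ := Function.ne_iff.mp hU0
  set 𝒲' := 𝒲 ⊓ LinearMap.ker (Matrix.entryLinearMap K K i0 ℓ)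
  -- `U 0` has row `e₀` at `istar`, so subtracting it changes nothing there after dropping
  -- substripe `0`
  set V : Fin t → Matrix (Fin n) (Fin (t + 1)) K :=
    fun j => U j.succ - (U j.succ i0 ℓ / U 0 i0 ℓ) • U 0
  have hV𝒲' : ∀ j, V j ∈ 𝒲' := fun j =>
    ⟨𝒲.sub_mem (hU𝒲 _) (𝒲.smul_mem _ (hU𝒲 0)), by
      simp [V, div_mul_cancel₀ _ (show U 0 i0 ℓ ≠ 0 from hℓ)]⟩
  have hVistar : ∀ j, (V j).submatrix id Fin.succ istar = Pi.single j 1 := fun j => by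
    ext c
    simp [V, hUistar, Pi.single_apply]
  have hlt : 𝒲'.map (rowLinearMap K i0) < 𝒲.map (rowLinearMap K i0) := by
    refine lt_of_le_of_ne (Submodule.map_mono inf_le_left) fun heq => hℓ ?_
    obtain ⟨U', hU', hU'i0⟩ := heq ▸ Submodule.mem_map_of_mem (f := rowLinearMap K i0) (hU𝒲 0)
    exact (congrFun hU'i0 ℓ).symm.trans hU'.2
  refine ⟨S, hS, fun j => (V j).submatrix id Fin.succ,
    fun j => (h𝒲dual (hV𝒲' j).1).submatrix_succ, fun j i hi hi' => ?_,
    finrank_span_range_eq_of_forall_eq_single hVistar, ?_⟩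
  · ext c
    simp [show V j i = 0 from h𝒲supp i hi hi' (hV𝒲' j).1]
  have := sum_finrank_span_rows_submatrix_lt Fin.succ hi0S inf_le_left hlt fun j => hV𝒲' j
  beta_reduce
  omega

end RepairSchemes

theorem substripe_reduction_general {n k b t : ℕ} (K : Type*) [Field K] [Fintype K]
    (hk : 2 ≤ k)
    (h : ∃ (G : Matrix (Fin k) (Fin n) K)
        (P : Fin (t + 1) → Fin (t + 1) → Matrix (Fin k) (Fin n) K),
      IsMDS G ∧
      ∀ istar : Fin n, ∃ S : Finset (Fin n), istar ∉ S ∧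
        ∃ W : Fin (t + 1) → Matrix (Fin n) (Fin (t + 1)) K,
          (∀ j, PiggyDual G P (W j)) ∧
          (∀ (j) (i : Fin n), i ∉ S → i ≠ istar → W j i = 0) ∧
          Module.finrank K
            (Submodule.span K (Set.range fun j => W j istar)) = t + 1 ∧
          ∑ i ∈ S,
            Module.finrank K (Submodule.span K (Set.range fun j => W j i)) ≤ b) :
    ∃ (G' : Matrix (Fin k) (Fin n) K)
        (P' : Fin t → Fin t → Matrix (Fin k) (Fin n) K),
      IsMDS G' ∧
      ∀ istar : Fin n, ∃ S : Finset (Fin n), istar ∉ S ∧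
        ∃ W : Fin t → Matrix (Fin n) (Fin t) K,
          (∀ j, PiggyDual G' P' (W j)) ∧
          (∀ (j) (i : Fin n), i ∉ S → i ≠ istar → W j i = 0) ∧
          Module.finrank K (Submodule.span K (Set.range fun j => W j istar)) = t ∧
          ∑ i ∈ S,
            Module.finrank K (Submodule.span K (Set.range fun j => W j i))
              ≤ b - 1 := by
  by_cases hkn : k ≤ n
  · obtain ⟨G, P, hG, hrep⟩ := h
    exact ⟨G, fun i j => P i.succ j.succ, hG, fun istar =>
      HasRepairScheme.drop_first_substripe (hG.col_ne_zero (by omega) hkn istar) (hrep istar)⟩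
  · exact ⟨0, 0, isMDS_zero_of_lt (not_le.mp hkn), fun istar => hasRepairScheme_zero istar _⟩

/-- if there is an `(n,k)` piggybacking code with `t+1 ≥ 3` substripes
in which every node admits a linear repair scheme from some repair set with bandwidth
at most `b` (in the "some d" regime), then there is an `(n,k)` piggybacking code over
the same field with `t` substripes in which every node admits a linear repair scheme
with bandwidth at most `b - 1`. -/
theorem substripe_reduction {n k b t : ℕ} (K : Type*) [Field K] [Fintype K]
    (hk : 2 ≤ k) (ht : 2 ≤ t)
    (h : ∃ (G : Matrix (Fin k) (Fin n) K)
        (P : Fin (t + 1) → Fin (t + 1) → Matrix (Fin k) (Fin n) K),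
      IsMDS G ∧
      ∀ istar : Fin n, ∃ S : Finset (Fin n), istar ∉ S ∧
        ∃ W : Fin (t + 1) → Matrix (Fin n) (Fin (t + 1)) K,
          (∀ j, PiggyDual G P (W j)) ∧
          (∀ (j) (i : Fin n), i ∉ S → i ≠ istar → W j i = 0) ∧
          Module.finrank K
            (Submodule.span K (Set.range fun j => W j istar)) = t + 1 ∧
          ∑ i ∈ S,
            Module.finrank K (Submodule.span K (Set.range fun j => W j i)) ≤ b) :
    ∃ (G' : Matrix (Fin k) (Fin n) K)
        (P' : Fin t → Fin t → Matrix (Fin k) (Fin n) K),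
      IsMDS G' ∧
      ∀ istar : Fin n, ∃ S : Finset (Fin n), istar ∉ S ∧
        ∃ W : Fin t → Matrix (Fin n) (Fin t) K,
          (∀ j, PiggyDual G' P' (W j)) ∧
          (∀ (j) (i : Fin n), i ∉ S → i ≠ istar → W j i = 0) ∧
          Module.finrank K (Submodule.span K (Set.range fun j => W j istar)) = t ∧
          ∑ i ∈ S,
            Module.finrank K (Submodule.span K (Set.range fun j => W j i))
              ≤ b - 1 :=
  substripe_reduction_general K hk h
end
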